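/- arXiv:math/0702385 — 2 statements merged into one kernel-verified Lean document; each statement's English description precedes it below -/
import Mathlib

section
/- Let (V, g) be a finite-dimensional real inner product space. The map sending a skew-adjoint endomorphism F with F³ + F = 0 to the (−i)-eigenspace of its complexification is a bijection between the set of skew-adjoint f-structures on (V, g) and the set of isotropic complex subspaces of V ⊗ ℂ (with respect to the bilinear extension of g). -/
/-!
Complexify: `F` becomes an endomorphism `A` of `ℂ ⊗ V` with `A³ + A = 0`, skew for the
bilinear extension `gℂ` of `g`, and commuting with conjugation. Skewness makes eigenvectors for
eigenvalues `λ, μ` with `λ + μ ≠ 0` `gℂ`-orthogonal, so `p = ker (A + i)` is isotropic and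
`ker A ⊥ p ⊕ p̄`; positivity of the hermitian form `gℂ (x̄, y)` then forces `ker A = (p ⊕ p̄)^⊥`.
Hence `A`, and with it `F`, is determined by `p`. Conversely, for isotropic `p` the same
positivity shows that `ℂ ⊗ V = p ⊕ p̄ ⊕ (p ⊕ p̄)^⊥`, and the endomorphism acting by `-i`, `i`, `0`
on the three summands commutes with conjugation, hence is the complexification of a skew
f-structure.
-/

open scoped TensorProduct InnerProductSpace
open Complex (I)

lemma LinearMap.BilinForm.apply_eq_zero_of_apply_eq_smul {K W : Type*} [Field K]
    [AddCommGroup W] [Module K W] {B : LinearMap.BilinForm K W} {A : Module.End K W}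
    (hA : ∀ x y, B (A x) y + B x (A y) = 0) {c d : K} {x y : W}
    (hx : A x = c • x) (hy : A y = d • y) (hcd : c + d ≠ 0) : B x y = 0 := by
  have h := hA x y
  rw [hx, hy, map_smul, LinearMap.smul_apply, map_smul, smul_eq_mul, smul_eq_mul, ← add_mul] at h
  exact (mul_eq_zero.mp h).resolve_left hcd

-- The components are the images of `x` under the spectral projectors of `X³ + X = X(X-i)(X+i)`.
lemma Module.End.exists_eq_add_add_of_comp_comp_add_eq_zero {W : Type*} [AddCommGroup W]
    [Module ℂ W] {A : Module.End ℂ W} (hA : A ∘ₗ A ∘ₗ A + A = 0) (x : W) :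
    ∃ x₀ x₁ x₂, x = x₀ + x₁ + x₂ ∧ A x₀ = 0 ∧ A x₁ = I • x₁ ∧ A x₂ = -I • x₂ := by
  have h3 : A (A (A x)) = -A x := eq_neg_of_add_eq_zero_left (LinearMap.congr_fun hA x)
  refine ⟨x + A (A x), -(2 : ℂ)⁻¹ • (A (A x) + I • A x),
    -(2 : ℂ)⁻¹ • (A (A x) - I • A x), by module, ?_, ?_, ?_⟩
  · rw [map_add, h3, add_neg_cancel]
  · simp only [map_smul, map_add, h3]
    match_scalars <;> simp [Complex.ext_iff]
  · simp only [map_smul, map_sub, h3]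
    match_scalars <;> simp [Complex.ext_iff]

namespace Complexification

noncomputable section

section Module

variable {V : Type*} [AddCommGroup V] [Module ℝ V]

def conj : ℂ ⊗[ℝ] V →ₛₗ[starRingEnd ℂ] ℂ ⊗[ℝ] V where
  toFun := TensorProduct.map Complex.conjAe.toLinearMap LinearMap.id
  map_add' := map_add _
  map_smul' c x := by
    induction x using TensorProduct.induction_on with
    | zero => simp
    | tmul d v => simp [TensorProduct.smul_tmul']
    | add x y hx hy => simp_all [smul_add]

@[simp] lemma conj_tmul (c : ℂ) (v : V) : conj (c ⊗ₜ[ℝ] v) = starRingEnd ℂ c ⊗ₜ v :=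
  rfl

@[simp] lemma conj_conj (x : ℂ ⊗[ℝ] V) : conj (conj x) = x := by
  induction x using TensorProduct.induction_on with
  | zero => simp
  | tmul c v => simp
  | add x y hx hy => simp [hx, hy]

lemma mem_map_conj {p : Submodule ℂ (ℂ ⊗[ℝ] V)} {x : ℂ ⊗[ℝ] V} :
    x ∈ p.map conj ↔ conj x ∈ p :=
  ⟨by rintro ⟨y, hy, rfl⟩; simpa using hy, fun hx => ⟨conj x, hx, conj_conj x⟩⟩

@[simp] lemma map_conj_map_conj (p : Submodule ℂ (ℂ ⊗[ℝ] V)) : (p.map conj).map conj = p := by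
  ext x; simp

lemma map_conj_sup_map_conj (p : Submodule ℂ (ℂ ⊗[ℝ] V)) :
    (p ⊔ p.map conj).map conj = p ⊔ p.map conj := by
  rw [Submodule.map_sup, map_conj_map_conj, sup_comm]

def re : ℂ ⊗[ℝ] V →ₗ[ℝ] V :=
  TensorProduct.lift (LinearMap.lsmul ℝ V ∘ₗ Complex.reLm)

def im : ℂ ⊗[ℝ] V →ₗ[ℝ] V :=
  TensorProduct.lift (LinearMap.lsmul ℝ V ∘ₗ Complex.imLm)

@[simp] lemma re_tmul (c : ℂ) (v : V) : re (c ⊗ₜ[ℝ] v) = c.re • v := rfl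

@[simp] lemma im_tmul (c : ℂ) (v : V) : im (c ⊗ₜ[ℝ] v) = c.im • v := rfl

lemma one_tmul_re_add_I_tmul_im (x : ℂ ⊗[ℝ] V) : 1 ⊗ₜ re x + I ⊗ₜ im x = x := by
  induction x using TensorProduct.induction_on with
  | zero => simp
  | tmul c v =>
    rw [re_tmul, im_tmul, TensorProduct.tmul_smul, TensorProduct.tmul_smul,
      TensorProduct.smul_tmul', TensorProduct.smul_tmul', ← TensorProduct.add_tmul]
    simp [Complex.real_smul]
  | add x y hx hy =>
    simp only [map_add, TensorProduct.tmul_add]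
    linear_combination (norm := abel) hx + hy

@[simp] lemma im_conj (x : ℂ ⊗[ℝ] V) : im (conj x) = -im x := by
  induction x using TensorProduct.induction_on with
  | zero => simp
  | tmul c v => simp [neg_smul]
  | add x y hx hy => simp [hx, hy, add_comm]

lemma one_tmul_re_of_conj_eq {x : ℂ ⊗[ℝ] V} (hx : conj x = x) : 1 ⊗ₜ re x = x := by
  have him : im x = 0 := by
    have := im_conj x
    rw [hx, eq_neg_iff_add_eq_zero, ← two_smul ℝ] at this
    exact (smul_eq_zero.mp this).resolve_left two_ne_zero
  simpa [him] using one_tmul_re_add_I_tmul_im x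

lemma conj_baseChange (F : V →ₗ[ℝ] V) (x : ℂ ⊗[ℝ] V) :
    conj (F.baseChange ℂ x) = F.baseChange ℂ (conj x) := by
  induction x using TensorProduct.induction_on with
  | zero => simp
  | tmul c v => simp
  | add x y hx hy => simp [hx, hy]

lemma exists_baseChange_eq {A : ℂ ⊗[ℝ] V →ₗ[ℂ] ℂ ⊗[ℝ] V}
    (hA : ∀ x, conj (A x) = A (conj x)) : ∃ F : V →ₗ[ℝ] V, F.baseChange ℂ = A := by
  refine ⟨re ∘ₗ A.restrictScalars ℝ ∘ₗ TensorProduct.mk ℝ ℂ V 1,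
    TensorProduct.AlgebraTensorModule.ext fun c v => ?_⟩
  have hreal : 1 ⊗ₜ re (A (1 ⊗ₜ v)) = A (1 ⊗ₜ v) :=
    one_tmul_re_of_conj_eq (by simp [hA])
  calc c ⊗ₜ re (A (1 ⊗ₜ v)) = c • A (1 ⊗ₜ v) := by
        rw [← hreal, TensorProduct.smul_tmul', smul_eq_mul, mul_one, hreal]
    _ = A (c ⊗ₜ v) := by rw [← map_smul, TensorProduct.smul_tmul', smul_eq_mul, mul_one]

lemma baseChange_injective :
    Function.Injective (LinearMap.baseChange ℂ : (V →ₗ[ℝ] V) → _) :=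
  LinearMap.baseChangeHom_injective ℝ V ℂ

lemma apply_conj_eq_smul {A : Module.End ℂ (ℂ ⊗[ℝ] V)} (hA : ∀ x, conj (A x) = A (conj x))
    {c : ℂ} {x : ℂ ⊗[ℝ] V} (hx : A x = c • x) : A (conj x) = starRingEnd ℂ c • conj x := by
  rw [← hA, hx, map_smulₛₗ]

lemma baseChange_comp_comp_add_eq_zero_iff (F : V →ₗ[ℝ] V) :
    F.baseChange ℂ ∘ₗ F.baseChange ℂ ∘ₗ F.baseChange ℂ + F.baseChange ℂ = 0 ↔
      F ∘ₗ F ∘ₗ F + F = 0 := by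
  rw [← LinearMap.baseChange_comp, ← LinearMap.baseChange_comp, ← LinearMap.baseChange_add,
    ← LinearMap.baseChange_zero]
  exact baseChange_injective.eq_iff

end Module

variable {V : Type*} [NormedAddCommGroup V] [InnerProductSpace ℝ V]

variable (V) in
abbrev complexifiedInner : LinearMap.BilinForm ℂ (ℂ ⊗[ℝ] V) :=
  LinearMap.BilinForm.baseChange ℂ (innerₗ V : LinearMap.BilinForm ℝ V)

local notation "gℂ" => complexifiedInner _

lemma complexifiedInner_tmul (a b : ℂ) (v w : V) :
    gℂ (a ⊗ₜ v) (b ⊗ₜ w) = a * b * (⟪v, w⟫_ℝ : ℂ) := by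
  simp [Algebra.smul_def, mul_comm]

lemma isSymm_complexifiedInner : LinearMap.IsSymm (complexifiedInner V) :=
  LinearMap.BilinForm.IsSymm.baseChange (B₂ := innerₗ V) ℂ ⟨fun v w => real_inner_comm w v⟩

lemma complexifiedInner_comm (x y : ℂ ⊗[ℝ] V) : gℂ x y = gℂ y x :=
  isSymm_complexifiedInner.eq x y

lemma complexifiedInner_conj_conj (x y : ℂ ⊗[ℝ] V) :
    gℂ (conj x) (conj y) = starRingEnd ℂ (gℂ x y) := by
  induction x using TensorProduct.induction_on with
  | zero => simp
  | tmul a v =>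
    induction y using TensorProduct.induction_on with
    | zero => simp
    | tmul b w => simp
    | add y y' hy hy' => simp only [map_add, hy, hy']
  | add x x' hx hx' => simp only [map_add, LinearMap.add_apply, hx, hx']

lemma complexifiedInner_conj_self (x : ℂ ⊗[ℝ] V) :
    gℂ (conj x) x = ((‖re x‖ ^ 2 + ‖im x‖ ^ 2 : ℝ) : ℂ) := by
  conv_lhs => rw [← one_tmul_re_add_I_tmul_im x]
  simp only [map_add, conj_tmul, LinearMap.add_apply, complexifiedInner_tmul, map_one,
    Complex.conj_I, real_inner_self_eq_norm_sq, real_inner_comm (im x)]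
  push_cast
  linear_combination (-(‖im x‖ : ℂ) ^ 2) * Complex.I_mul_I

lemma eq_zero_of_complexifiedInner_conj_self {x : ℂ ⊗[ℝ] V} (hx : gℂ (conj x) x = 0) :
    x = 0 := by
  rw [complexifiedInner_conj_self, Complex.ofReal_eq_zero] at hx
  obtain ⟨hre, him⟩ := (add_eq_zero_iff_of_nonneg (sq_nonneg _) (sq_nonneg _)).mp hx
  rw [← one_tmul_re_add_I_tmul_im x]
  simp_all

lemma baseChange_isSkew_iff (F : V →ₗ[ℝ] V) :
    (∀ x y, gℂ (F.baseChange ℂ x) y + gℂ x (F.baseChange ℂ y) = 0) ↔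
      ∀ v w : V, ⟪F v, w⟫_ℝ + ⟪v, F w⟫_ℝ = 0 := by
  refine ⟨fun h v w => ?_, fun h x y => ?_⟩
  · have hc := h (1 ⊗ₜ v) (1 ⊗ₜ w)
    simp only [LinearMap.baseChange_tmul, complexifiedInner_tmul, one_mul] at hc
    exact_mod_cast hc
  induction x using TensorProduct.induction_on with
  | zero => simp
  | tmul a v =>
    induction y using TensorProduct.induction_on with
    | zero => simp
    | tmul b w =>
      simp only [LinearMap.baseChange_tmul, complexifiedInner_tmul]
      have hc : (⟪F v, w⟫_ℝ : ℂ) + ⟪v, F w⟫_ℝ = 0 := by exact_mod_cast h v w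
      linear_combination (a * b) * hc
    | add y y' hy hy' => simp only [map_add]; linear_combination hy + hy'
  | add x x' hx hx' => simp only [map_add, LinearMap.add_apply]; linear_combination hx + hx'

def IsIsotropic (p : Submodule ℂ (ℂ ⊗[ℝ] V)) : Prop :=
  ∀ v ∈ p, ∀ w ∈ p, complexifiedInner V v w = 0

lemma IsIsotropic.map_conj {p : Submodule ℂ (ℂ ⊗[ℝ] V)} (hp : IsIsotropic p) :
    IsIsotropic (p.map conj) := by
  intro v hv w hw
  rw [mem_map_conj] at hv hw
  simpa [complexifiedInner_conj_conj] using congrArg (starRingEnd ℂ) (hp _ hv _ hw)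

lemma isIsotropic_eigenspace {A : Module.End ℂ (ℂ ⊗[ℝ] V)}
    (hA : ∀ x y, gℂ (A x) y + gℂ x (A y) = 0) : IsIsotropic (A.eigenspace (-I)) :=
  fun _ hv _ hw => LinearMap.BilinForm.apply_eq_zero_of_apply_eq_smul hA
    (Module.End.mem_eigenspace_iff.mp hv) (Module.End.mem_eigenspace_iff.mp hw)
    (by simp [Complex.ext_iff])

def perp (p : Submodule ℂ (ℂ ⊗[ℝ] V)) : Submodule ℂ (ℂ ⊗[ℝ] V) :=
  (complexifiedInner V).orthogonal (p ⊔ p.map conj)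

lemma perp_map_conj (p : Submodule ℂ (ℂ ⊗[ℝ] V)) : perp (p.map conj) = perp p := by
  rw [perp, perp, map_conj_map_conj, sup_comm]

lemma conj_mem_perp {p : Submodule ℂ (ℂ ⊗[ℝ] V)} {t : ℂ ⊗[ℝ] V} (ht : t ∈ perp p) :
    conj t ∈ perp p := by
  intro n hn
  have hn' : conj n ∈ p ⊔ p.map conj :=
    mem_map_conj.mp (by rwa [map_conj_sup_map_conj])
  rw [← conj_conj n, complexifiedInner_conj_conj, ht _ hn', map_zero]

lemma isCompl_orthogonal_of_map_conj_le [FiniteDimensional ℝ V]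
    {M : Submodule ℂ (ℂ ⊗[ℝ] V)} (hM : M.map conj ≤ M) :
    IsCompl M ((complexifiedInner V).orthogonal M) := by
  have hsymm := isSymm_complexifiedInner (V := V)
  refine LinearMap.BilinForm.isCompl_orthogonal_of_restrict_nondegenerate hsymm.isRefl ?_
  refine (LinearMap.IsRefl.nondegenerate_iff_separatingLeft
    (B := (complexifiedInner V).restrict M) fun a b h => hsymm.isRefl _ _ h).mpr fun m hm => ?_
  have hconj : conj (m : ℂ ⊗[ℝ] V) ∈ M := hM ⟨m, m.2, rfl⟩
  exact Subtype.ext <| eq_zero_of_complexifiedInner_conj_self <| by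
    rw [complexifiedInner_comm]; simpa using hm ⟨_, hconj⟩

lemma sup_map_conj_sup_perp [FiniteDimensional ℝ V] (p : Submodule ℂ (ℂ ⊗[ℝ] V)) :
    p ⊔ p.map conj ⊔ perp p = ⊤ :=
  (isCompl_orthogonal_of_map_conj_le (map_conj_sup_map_conj p).le).sup_eq_top

lemma IsIsotropic.disjoint {p : Submodule ℂ (ℂ ⊗[ℝ] V)} (hp : IsIsotropic p) :
    Disjoint p (p.map conj ⊔ perp p) := by
  refine Submodule.disjoint_def.mpr fun x hx hx' => ?_
  obtain ⟨s, hs, t, ht, rfl⟩ := Submodule.mem_sup.mp hx'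
  have hconj : conj (s + t) ∈ p.map conj := mem_map_conj.mpr (by simpa using hx)
  refine eq_zero_of_complexifiedInner_conj_self ?_
  rw [map_add, hp.map_conj _ hconj _ hs, ht _ (Submodule.mem_sup_right hconj), add_zero]

lemma IsIsotropic.isCompl [FiniteDimensional ℝ V] {p : Submodule ℂ (ℂ ⊗[ℝ] V)}
    (hp : IsIsotropic p) : IsCompl p (p.map conj ⊔ perp p) :=
  ⟨hp.disjoint, codisjoint_iff.mpr (by rw [← sup_assoc, sup_map_conj_sup_perp])⟩

lemma IsIsotropic.isCompl_map_conj [FiniteDimensional ℝ V] {p : Submodule ℂ (ℂ ⊗[ℝ] V)}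
    (hp : IsIsotropic p) : IsCompl (p.map conj) (p ⊔ perp p) := by
  simpa [perp_map_conj] using hp.map_conj.isCompl

lemma exists_add_add_eq [FiniteDimensional ℝ V] (p : Submodule ℂ (ℂ ⊗[ℝ] V))
    (x : ℂ ⊗[ℝ] V) : ∃ u ∈ p, ∃ s ∈ p.map conj, ∃ t ∈ perp p, u + s + t = x := by
  have hx : x ∈ p ⊔ p.map conj ⊔ perp p := by simp [sup_map_conj_sup_perp]
  obtain ⟨y, hy, t, ht, rfl⟩ := Submodule.mem_sup.mp hx
  obtain ⟨u, hu, s, hs, rfl⟩ := Submodule.mem_sup.mp hy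
  exact ⟨u, hu, s, hs, t, ht, rfl⟩

/-- `A` is the complexification of the f-structure whose `(-i)`-eigenspace is `p`. -/
structure IsFStructureOf (A : Module.End ℂ (ℂ ⊗[ℝ] V)) (p : Submodule ℂ (ℂ ⊗[ℝ] V)) :
    Prop where
  apply_of_mem : ∀ x ∈ p, A x = -I • x
  apply_of_mem_map_conj : ∀ x ∈ p.map conj, A x = I • x
  apply_of_mem_perp : ∀ x ∈ perp p, A x = 0

namespace IsFStructureOf

variable {A B : Module.End ℂ (ℂ ⊗[ℝ] V)} {p : Submodule ℂ (ℂ ⊗[ℝ] V)}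

lemma apply_add_add (hA : IsFStructureOf A p) {u s t : ℂ ⊗[ℝ] V} (hu : u ∈ p)
    (hs : s ∈ p.map conj) (ht : t ∈ perp p) : A (u + s + t) = -I • u + I • s := by
  rw [map_add, map_add, hA.apply_of_mem u hu, hA.apply_of_mem_map_conj s hs,
    hA.apply_of_mem_perp t ht, add_zero]

lemma ext [FiniteDimensional ℝ V] (hA : IsFStructureOf A p) (hB : IsFStructureOf B p) :
    A = B := by
  refine LinearMap.ext fun x => ?_
  obtain ⟨u, hu, s, hs, t, ht, rfl⟩ := exists_add_add_eq p x
  rw [hA.apply_add_add hu hs ht, hB.apply_add_add hu hs ht]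

lemma comp_comp_add [FiniteDimensional ℝ V] (hA : IsFStructureOf A p) :
    A ∘ₗ A ∘ₗ A + A = 0 := by
  refine LinearMap.ext fun x => ?_
  obtain ⟨u, hu, s, hs, t, ht, rfl⟩ := exists_add_add_eq p x
  simp only [LinearMap.add_apply, LinearMap.comp_apply, LinearMap.zero_apply]
  rw [hA.apply_add_add hu hs ht]
  simp only [map_add, map_smul, hA.apply_of_mem u hu, hA.apply_of_mem_map_conj s hs]
  match_scalars <;> simp

lemma conj_apply [FiniteDimensional ℝ V] (hA : IsFStructureOf A p) (x : ℂ ⊗[ℝ] V) :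
    conj (A x) = A (conj x) := by
  obtain ⟨u, hu, s, hs, t, ht, rfl⟩ := exists_add_add_eq p x
  have hconj : conj (u + s + t) = conj s + conj u + conj t := by simp only [map_add]; abel
  rw [hconj, hA.apply_add_add (mem_map_conj.mp hs) (mem_map_conj.mpr (by simpa using hu))
    (conj_mem_perp ht), hA.apply_add_add hu hs ht]
  simp [add_comm]

lemma isSkew [FiniteDimensional ℝ V] (hA : IsFStructureOf A p) (hp : IsIsotropic p)
    (x y : ℂ ⊗[ℝ] V) : gℂ (A x) y + gℂ x (A y) = 0 := by
  obtain ⟨u, hu, s, hs, t, ht, rfl⟩ := exists_add_add_eq p x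
  obtain ⟨u', hu', s', hs', t', ht', rfl⟩ := exists_add_add_eq p y
  have hperp {n : ℂ ⊗[ℝ] V} (hn : n ∈ p ∨ n ∈ p.map conj) {t : ℂ ⊗[ℝ] V} (ht : t ∈ perp p) :
      gℂ n t = 0 ∧ gℂ t n = 0 := by
    have h := ht n (hn.elim (Submodule.mem_sup_left ·) (Submodule.mem_sup_right ·))
    exact ⟨h, by rw [complexifiedInner_comm, h]⟩
  rw [hA.apply_add_add hu hs ht, hA.apply_add_add hu' hs' ht']
  simp only [map_add, map_smul, LinearMap.add_apply, LinearMap.smul_apply, smul_eq_mul,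
    hp u hu u' hu', hp.map_conj s hs s' hs', (hperp (.inl hu) ht').1, (hperp (.inr hs) ht').1,
    (hperp (.inl hu') ht).2, (hperp (.inr hs') ht).2]
  ring

lemma eigenspace_eq [FiniteDimensional ℝ V] (hA : IsFStructureOf A p) (hp : IsIsotropic p) :
    A.eigenspace (-I) = p := by
  refine le_antisymm (fun x hx => ?_) fun x hx =>
    Module.End.mem_eigenspace_iff.mpr (hA.apply_of_mem x hx)
  obtain ⟨u, hu, s, hs, t, ht, rfl⟩ := exists_add_add_eq p x
  rw [Module.End.mem_eigenspace_iff, hA.apply_add_add hu hs ht] at hx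
  have h2s : (2 : ℂ) • s = -t := by
    have : I • ((2 : ℂ) • s + t) = 0 := by rw [← sub_eq_zero.mpr hx]; module
    exact eq_neg_of_add_eq_zero_left ((smul_eq_zero.mp this).resolve_left Complex.I_ne_zero)
  have hs0 : s = 0 := by
    have := Submodule.disjoint_def.mp (hp.isCompl_map_conj.disjoint.mono_right le_sup_right)
      ((2 : ℂ) • s) (Submodule.smul_mem _ _ hs) (h2s ▸ Submodule.neg_mem _ ht)
    simpa using this
  have ht0 : t = 0 := by simpa [hs0] using h2s.symm
  simpa [hs0, ht0] using hu

end IsFStructureOf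

lemma exists_isFStructureOf [FiniteDimensional ℝ V] {p : Submodule ℂ (ℂ ⊗[ℝ] V)}
    (hp : IsIsotropic p) : ∃ A, IsFStructureOf A p := by
  let P := p.projection _ hp.isCompl
  let Q := (p.map conj).projection _ hp.isCompl_map_conj
  refine ⟨-I • P + I • Q, ⟨fun x hx => ?_, fun x hx => ?_, fun x hx => ?_⟩⟩
  · simp [P, Q, Submodule.projection_apply_of_mem_left _ hx,
      Submodule.projection_apply_of_mem_right _ (Submodule.mem_sup_left hx)]
  · simp [P, Q, Submodule.projection_apply_of_mem_left _ hx,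
      Submodule.projection_apply_of_mem_right _ (Submodule.mem_sup_left hx)]
  · simp [P, Q, Submodule.projection_apply_of_mem_right _ (Submodule.mem_sup_right hx)]

lemma apply_eq_zero_of_mem_perp_eigenspace {A : Module.End ℂ (ℂ ⊗[ℝ] V)}
    (hskew : ∀ x y, gℂ (A x) y + gℂ x (A y) = 0) (hconj : ∀ x, conj (A x) = A (conj x))
    (hcube : A ∘ₗ A ∘ₗ A + A = 0) {x : ℂ ⊗[ℝ] V} (hx : x ∈ perp (A.eigenspace (-I))) :
    A x = 0 := by
  -- The `±i`-part `x₁ + x₂` of `x` is `gℂ`-orthogonal to `x` (its conjugate lies in `p ⊕ p̄`)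
  -- and to `x₀` (by skewness), so positivity forces it to vanish.
  obtain ⟨x₀, x₁, x₂, rfl, h₀, h₁, h₂⟩ := A.exists_eq_add_add_of_comp_comp_add_eq_zero hcube x
  have hconj₁ : A (conj x₁) = -I • conj x₁ := by simpa using apply_conj_eq_smul hconj h₁
  have hconj₂ : A (conj x₂) = I • conj x₂ := by simpa using apply_conj_eq_smul hconj h₂
  have hmem : conj (x₁ + x₂) ∈ A.eigenspace (-I) ⊔ (A.eigenspace (-I)).map conj := by
    rw [map_add]
    exact Submodule.add_mem_sup (Module.End.mem_eigenspace_iff.mpr hconj₁)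
      (mem_map_conj.mpr (by simpa using Module.End.mem_eigenspace_iff.mpr h₂))
  have horth {y : ℂ ⊗[ℝ] V} {c : ℂ} (hy : A y = c • y) (hc : c ≠ 0) : gℂ y x₀ = 0 :=
    LinearMap.BilinForm.apply_eq_zero_of_apply_eq_smul hskew hy (h₀.trans (zero_smul ℂ _).symm)
      (by simpa using hc)
  have horth₀ : gℂ (conj (x₁ + x₂)) x₀ = 0 := by
    rw [map_add, map_add, LinearMap.add_apply, horth hconj₁ (by simp), horth hconj₂ (by simp),
      add_zero]
  have hzero : x₁ + x₂ = 0 := by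
    refine eq_zero_of_complexifiedInner_conj_self ?_
    have := hx _ hmem
    rwa [add_assoc, map_add, horth₀, zero_add] at this
  rw [add_assoc, hzero, add_zero, h₀]

lemma isFStructureOf_eigenspace {A : Module.End ℂ (ℂ ⊗[ℝ] V)}
    (hskew : ∀ x y, gℂ (A x) y + gℂ x (A y) = 0) (hconj : ∀ x, conj (A x) = A (conj x))
    (hcube : A ∘ₗ A ∘ₗ A + A = 0) : IsFStructureOf A (A.eigenspace (-I)) where
  apply_of_mem _ hx := Module.End.mem_eigenspace_iff.mp hx
  apply_of_mem_map_conj x hx := by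
    simpa using apply_conj_eq_smul hconj (Module.End.mem_eigenspace_iff.mp (mem_map_conj.mp hx))
  apply_of_mem_perp _ hx := apply_eq_zero_of_mem_perp_eigenspace hskew hconj hcube hx

end

end Complexification

open Complexification in
/-- The map sending a skew-adjoint `f`-structure `F` on a real inner product
space to the `(-i)`-eigenspace of its complexification is injective, and its range is
exactly the set of isotropic complex subspaces of `ℂ ⊗ V` (for the complex-bilinear
extension of the inner product); i.e. it is a bijection onto that set. -/
theorem stmt_4 (V : Type*) [NormedAddCommGroup V] [InnerProductSpace ℝ V]
    [FiniteDimensional ℝ V] :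
    Function.Injective
      (fun F : {F : V →ₗ[ℝ] V //
          F ∘ₗ F ∘ₗ F + F = 0 ∧ ∀ x y : V, ⟪F x, y⟫_ℝ + ⟪x, F y⟫_ℝ = 0} =>
        Module.End.eigenspace (LinearMap.baseChange ℂ F.1) (-Complex.I)) ∧
    Set.range
      (fun F : {F : V →ₗ[ℝ] V //
          F ∘ₗ F ∘ₗ F + F = 0 ∧ ∀ x y : V, ⟪F x, y⟫_ℝ + ⟪x, F y⟫_ℝ = 0} =>
        Module.End.eigenspace (LinearMap.baseChange ℂ F.1) (-Complex.I)) =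
      {p : Submodule ℂ (ℂ ⊗[ℝ] V) | ∀ v ∈ p, ∀ w ∈ p,
        LinearMap.BilinForm.baseChange ℂ
          (innerₗ V : LinearMap.BilinForm ℝ V) v w = 0} := by
  have hstruct (F : {F : V →ₗ[ℝ] V //
      F ∘ₗ F ∘ₗ F + F = 0 ∧ ∀ x y : V, ⟪F x, y⟫_ℝ + ⟪x, F y⟫_ℝ = 0}) :=
    isFStructureOf_eigenspace ((baseChange_isSkew_iff F.1).mpr F.2.2) (conj_baseChange F.1)
      ((baseChange_comp_comp_add_eq_zero_iff F.1).mpr F.2.1)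
  refine ⟨fun F G hFG => Subtype.ext (baseChange_injective ((hstruct F).ext ?_)), ?_⟩
  · dsimp only at hFG
    rw [hFG]
    exact hstruct G
  ext p
  refine ⟨?_, fun hp => ?_⟩
  · rintro ⟨F, rfl⟩
    exact isIsotropic_eigenspace ((baseChange_isSkew_iff F.1).mpr F.2.2)
  obtain ⟨A, hA⟩ := exists_isFStructureOf hp
  obtain ⟨F, rfl⟩ := exists_baseChange_eq hA.conj_apply
  exact ⟨⟨F, (baseChange_comp_comp_add_eq_zero_iff F).mp hA.comp_comp_add,
    (baseChange_isSkew_iff F).mp (hA.isSkew hp)⟩, hA.eigenspace_eq hp⟩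
end

section
/- Let W be an algebraic curvature tensor on a real inner product space (V, g) (i.e., W satisfies the symmetries of a Riemann curvature tensor including the first Bianchi identity) and suppose W is trace-free (its Ricci contraction vanishes). If g(W(X,Y)X, Y) = 0 for all X, Y ∈ V ⊗ ℂ spanning a 2-dimensional isotropic subspace (with respect to the complex-bilinear extensions), then W = 0, provided dim V ≥ 4. -/
/-!
Test the isotropic condition on the planes spanned by `e i + √-1 e j` and `e k ± √-1 e l`, for an
orthonormal basis `e` and distinct indices: real and imaginary parts give three linear identities
among the components `R i j k l`. The mixed one, together with the Bianchi identity, kills the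
components with four distinct indices. The other two say that `R i k i l` and the differences of
sectional curvatures `R i k i k - R j k j k` do not depend on `i`; since the trace-free condition
makes the sum of these `n - 2` (or `n - 1`) equal terms vanish, they vanish too.
-/

open scoped TensorProduct InnerProductSpace

open Finset

theorem eq_zero_of_sum_eq_zero_of_forall_notMem_eq {ι M : Type*} [Fintype ι] [DecidableEq ι]
    [AddCommGroup M] [IsAddTorsionFree M] {f : ι → M} {s : Finset ι} {c : M}
    (hs : #s < Fintype.card ι) (hsum : ∑ x, f x = 0) (hs0 : ∑ x ∈ s, f x = 0)
    (hc : ∀ x ∉ s, f x = c) : c = 0 := by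
  rw [← sum_compl_add_sum s, hs0, add_zero,
    sum_congr rfl fun x hx => hc x (mem_compl.mp hx), sum_const, card_compl] at hsum
  exact (nsmul_eq_zero_iff.mp hsum).resolve_right (by omega)

/-- The components `R i j k l = W (e i) (e j) (e k) (e l)` of an algebraic curvature tensor. -/
structure IsAlgebraicCurvature {ι : Type*} (R : ι → ι → ι → ι → ℝ) : Prop where
  antisymm : ∀ i j k l, R i j k l = -R j i k l
  pair_symm : ∀ i j k l, R i j k l = R k l i j
  bianchi : ∀ i j k l, R i j k l + R j k i l + R k i j l = 0

namespace IsAlgebraicCurvature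

variable {ι : Type*} {R : ι → ι → ι → ι → ℝ}

theorem antisymm' (hR : IsAlgebraicCurvature R) (i j k l : ι) : R i j k l = -R i j l k := by
  rw [hR.pair_symm, hR.antisymm, hR.pair_symm l k]

theorem apply_self_left (hR : IsAlgebraicCurvature R) (i k l : ι) : R i i k l = 0 := by
  linarith [hR.antisymm i i k l]

theorem apply_self_right (hR : IsAlgebraicCurvature R) (i j k : ι) : R i j k k = 0 := by
  linarith [hR.antisymm' i j k k]

theorem sectional_symm (hR : IsAlgebraicCurvature R) (i j : ι) : R i j i j = R j i j i := by
  rw [hR.antisymm, hR.antisymm', neg_neg]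

theorem eq_zero_of_nodup [DecidableEq ι] (hR : IsAlgebraicCurvature R)
    (hmixed : ∀ i j k l, [i, j, k, l].Nodup → R i k j l + R i l j k = 0)
    {i j k l : ι} (h : [i, j, k, l].Nodup) : R i j k l = 0 := by
  have h₁ := hmixed i k j l (by simp_all [eq_comm])
  have h₂ := hmixed i j k l h
  linarith [hR.bianchi i j k l, hR.pair_symm j k i l, hR.antisymm k i j l, hR.antisymm' i l k j]

variable [Fintype ι]

theorem sum_sectional_eq_zero (hR : IsAlgebraicCurvature R)
    (htrace : ∀ j k, ∑ i, R i j k i = 0) (j : ι) : ∑ i, R i j i j = 0 := by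
  simpa [hR.antisymm' _ j j] using htrace j j

variable [DecidableEq ι]

theorem ricci_component_eq_zero_of_ne (hR : IsAlgebraicCurvature R) (hcard : 2 < Fintype.card ι)
    (htrace : ∀ j k, ∑ i, R i j k i = 0)
    (hricci : ∀ i j k l, [i, j, k, l].Nodup → R i k i l = R j k j l)
    {p q r : ι} (hpq : p ≠ q) (hpr : p ≠ r) (hqr : q ≠ r) : R p q p r = 0 := by
  refine neg_eq_zero.mp <| eq_zero_of_sum_eq_zero_of_forall_notMem_eq (s := {q, r})
    (by rwa [card_pair hqr]) (htrace q r)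
    (by rw [sum_pair hqr, hR.apply_self_left, hR.apply_self_right, add_zero]) fun m hm => ?_
  simp only [mem_insert, mem_singleton, not_or] at hm
  rw [hR.antisymm' m q r m]
  rcases eq_or_ne m p with rfl | hmp
  · rfl
  · rw [hricci m p q r (by simp_all [eq_comm])]

theorem sectional_eq_of_ne (hR : IsAlgebraicCurvature R) (hcard : 2 < Fintype.card ι)
    (htrace : ∀ j k, ∑ i, R i j k i = 0)
    (hsect : ∀ i j k l, [i, j, k, l].Nodup → R i k i k - R i l i l - R j k j k + R j l j l = 0)
    {i j k : ι} (hij : i ≠ j) (hik : i ≠ k) (hjk : j ≠ k) : R i k i k = R j k j k := by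
  refine sub_eq_zero.mp <| eq_zero_of_sum_eq_zero_of_forall_notMem_eq
    (f := fun x => R i x i x - R j x j x) (s := {i, j}) (by rwa [card_pair hij]) ?_ ?_
    fun x hx => ?_
  · simp only [sum_sub_distrib, hR.sectional_symm i, hR.sectional_symm j,
      hR.sum_sectional_eq_zero htrace, sub_zero]
  · rw [sum_pair hij, hR.apply_self_left, hR.apply_self_left, hR.sectional_symm j i]
    ring
  · simp only [mem_insert, mem_singleton, not_or] at hx
    rcases eq_or_ne x k with rfl | hxk
    · rfl
    · linarith [hsect i j x k (by simp_all [eq_comm])]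

theorem sectional_eq_zero (hR : IsAlgebraicCurvature R) (hcard : 2 < Fintype.card ι)
    (htrace : ∀ j k, ∑ i, R i j k i = 0)
    (hsect : ∀ i j k l, [i, j, k, l].Nodup → R i k i k - R i l i l - R j k j k + R j l j l = 0)
    {p q : ι} (hpq : p ≠ q) : R p q p q = 0 :=
  eq_zero_of_sum_eq_zero_of_forall_notMem_eq (f := fun x => R x q x q) (s := {q})
    (by rw [card_singleton]; omega) (hR.sum_sectional_eq_zero htrace q)
    (by rw [sum_singleton, hR.apply_self_left]) fun x hx => by
      rcases eq_or_ne x p with rfl | hxp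
      · rfl
      · exact hR.sectional_eq_of_ne hcard htrace hsect hxp (by simpa using hx) hpq

theorem ricci_component_eq_zero (hR : IsAlgebraicCurvature R) (hcard : 2 < Fintype.card ι)
    (htrace : ∀ j k, ∑ i, R i j k i = 0)
    (hsect : ∀ i j k l, [i, j, k, l].Nodup → R i k i k - R i l i l - R j k j k + R j l j l = 0)
    (hricci : ∀ i j k l, [i, j, k, l].Nodup → R i k i l = R j k j l) (p q r : ι) :
    R p q p r = 0 := by
  rcases eq_or_ne p q with rfl | hpq
  · exact hR.apply_self_left p p r
  rcases eq_or_ne p r with rfl | hpr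
  · exact hR.apply_self_right p q p
  rcases eq_or_ne q r with rfl | hqr
  · exact hR.sectional_eq_zero hcard htrace hsect hpq
  · exact hR.ricci_component_eq_zero_of_ne hcard htrace hricci hpq hpr hqr

theorem eq_zero (hR : IsAlgebraicCurvature R) (hcard : 2 < Fintype.card ι)
    (htrace : ∀ j k, ∑ i, R i j k i = 0)
    (hiso : ∀ i j k l, [i, j, k, l].Nodup →
      R i k i k - R i l i l - R j k j k + R j l j l = 0 ∧ R i k j l + R i l j k = 0 ∧
        R i k i l = R j k j l) :
    R = 0 := by
  have hleft := hR.ricci_component_eq_zero hcard htrace (fun i j k l h => (hiso i j k l h).1)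
    (fun i j k l h => (hiso i j k l h).2.2)
  ext i j k l
  simp only [Pi.zero_apply]
  rcases eq_or_ne i j with rfl | hij
  · exact hR.apply_self_left i k l
  rcases eq_or_ne k l with rfl | hkl
  · exact hR.apply_self_right i j k
  rcases eq_or_ne i k with rfl | hik
  · exact hleft i j l
  rcases eq_or_ne i l with rfl | hil
  · rw [hR.antisymm', hleft, neg_zero]
  rcases eq_or_ne j k with rfl | hjk
  · rw [hR.antisymm, hleft, neg_zero]
  rcases eq_or_ne j l with rfl | hjl
  · rw [hR.antisymm, hR.antisymm', hleft, neg_zero, neg_zero]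
  exact hR.eq_zero_of_nodup (fun i j k l h => (hiso i j k l h).2.1) (by simp [*])

end IsAlgebraicCurvature

section Complexification

variable {V : Type*} [AddCommGroup V] [Module ℝ V] {W : V →ₗ[ℝ] V →ₗ[ℝ] V →ₗ[ℝ] V →ₗ[ℝ] ℝ}
  {WC : (ℂ ⊗[ℝ] V) →ₗ[ℂ] (ℂ ⊗[ℝ] V) →ₗ[ℂ] (ℂ ⊗[ℝ] V) →ₗ[ℂ] (ℂ ⊗[ℝ] V) →ₗ[ℂ] ℂ}

theorem complexification_apply_tmul
    (hWC : ∀ x y z t : V, WC (1 ⊗ₜ x) (1 ⊗ₜ y) (1 ⊗ₜ z) (1 ⊗ₜ t) = (W x y z t : ℂ))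
    (a b c d : ℂ) (x y z t : V) :
    WC (a ⊗ₜ x) (b ⊗ₜ y) (c ⊗ₜ z) (d ⊗ₜ t) = a * b * c * d * W x y z t := by
  have hsmul : ∀ (a : ℂ) (x : V), a ⊗ₜ[ℝ] x = a • (1 : ℂ) ⊗ₜ x := fun a x => by
    rw [TensorProduct.smul_tmul', smul_eq_mul, mul_one]
  simp only [hsmul a, hsmul b, hsmul c, hsmul d, map_smul, LinearMap.smul_apply, hWC,
    smul_eq_mul]
  ring

theorem complexification_apply_plane (hpair : ∀ X Y Z T : V, W X Y Z T = W Z T X Y)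
    (hWC : ∀ x y z t : V, WC (1 ⊗ₜ x) (1 ⊗ₜ y) (1 ⊗ₜ z) (1 ⊗ₜ t) = (W x y z t : ℂ))
    (x y z t : V) (u v : ℂ) :
    WC (1 ⊗ₜ x + u ⊗ₜ y) (1 ⊗ₜ z + v ⊗ₜ t) (1 ⊗ₜ x + u ⊗ₜ y) (1 ⊗ₜ z + v ⊗ₜ t) =
      W x z x z + v ^ 2 * W x t x t + u ^ 2 * W y z y z + u ^ 2 * v ^ 2 * W y t y t +
        2 * v * W x z x t + 2 * u ^ 2 * v * W y z y t + 2 * u * W x z y z +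
        2 * u * v ^ 2 * W x t y t + 2 * u * v * (W x z y t + W x t y z) := by
  simp only [map_add, LinearMap.add_apply, complexification_apply_tmul hWC]
  rw [hpair x t x z, hpair y t y z, hpair y z x z, hpair y t x t, hpair y z x t, hpair y t x z]
  ring

/-- Real and imaginary parts of the two cases `v = ±√-1`. -/
theorem isotropic_identities (hpair : ∀ X Y Z T : V, W X Y Z T = W Z T X Y)
    (hWC : ∀ x y z t : V, WC (1 ⊗ₜ x) (1 ⊗ₜ y) (1 ⊗ₜ z) (1 ⊗ₜ t) = (W x y z t : ℂ))
    {x y z t : V} (hiso : ∀ v : ℂ, v ^ 2 = -1 →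
      WC (1 ⊗ₜ x + Complex.I ⊗ₜ y) (1 ⊗ₜ z + v ⊗ₜ t)
        (1 ⊗ₜ x + Complex.I ⊗ₜ y) (1 ⊗ₜ z + v ⊗ₜ t) = 0) :
    W x z x z - W x t x t - W y z y z + W y t y t = 0 ∧ W x z y t + W x t y z = 0 ∧
      W x z x t = W y z y t := by
  have hI := hiso Complex.I Complex.I_sq
  have hnegI := hiso (-Complex.I) (by rw [neg_sq, Complex.I_sq])
  rw [complexification_apply_plane hpair hWC] at hI hnegI
  simp only [Complex.I_sq, neg_mul, one_mul, mul_neg, mul_one, neg_neg, Complex.ext_iff,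
    Complex.add_re, Complex.ofReal_re, Complex.neg_re, Complex.mul_re, Complex.re_ofNat,
    Complex.I_re, mul_zero, Complex.im_ofNat, Complex.I_im, sub_self, zero_mul, Complex.mul_im,
    add_zero, Complex.ofReal_im, neg_zero, zero_sub, Complex.add_im, sub_zero, Complex.zero_re,
    Complex.neg_im, zero_add, Complex.zero_im, even_two, Even.neg_pow] at hI hnegI
  refine ⟨by linarith, by linarith, by linarith⟩

end Complexification

theorem isotropic_plane_of_orthonormal {V ι : Type*} [NormedAddCommGroup V]
    [InnerProductSpace ℝ V]
    {e : ι → V} (he : Orthonormal ℝ e) {i j k l : ι} (h : [i, j, k, l].Nodup)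
    {u v : ℂ} (hu : u ^ 2 = -1) (hv : v ^ 2 = -1) :
    let g := LinearMap.BilinForm.baseChange ℂ (innerₗ V : LinearMap.BilinForm ℝ V)
    let X : ℂ ⊗[ℝ] V := 1 ⊗ₜ e i + u ⊗ₜ e j
    let Y : ℂ ⊗[ℝ] V := 1 ⊗ₜ e k + v ⊗ₜ e l
    LinearIndependent ℂ ![X, Y] ∧ g X X = 0 ∧ g X Y = 0 ∧ g Y Y = 0 := by
  intro g X Y
  classical
  simp only [List.nodup_cons, List.mem_cons, List.not_mem_nil, not_or] at h
  obtain ⟨⟨hij, hik, hil, -⟩, ⟨hjk, hjl, -⟩, ⟨hkl, -⟩, -⟩ := h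
  have hg (a b : ℂ) (p q : ι) : g (a ⊗ₜ e p) (b ⊗ₜ e q) = if p = q then a * b else 0 := by
    simp only [g, LinearMap.BilinForm.baseChange_tmul, innerₗ_apply_apply,
      orthonormal_iff_ite.mp he, Complex.real_smul]
    split_ifs <;> simp
  refine ⟨LinearIndependent.pair_iff.mpr fun s t hst => ⟨?_, ?_⟩, ?_, ?_, ?_⟩
  · have := congrArg (fun Z => g Z (1 ⊗ₜ e i)) hst
    simpa [X, Y, hg, Ne.symm hij, Ne.symm hik, Ne.symm hil] using this
  · have := congrArg (fun Z => g Z (1 ⊗ₜ e k)) hst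
    simpa [X, Y, hg, hik, hjk, Ne.symm hkl] using this
  · simp only [X, map_add, LinearMap.add_apply, hg, if_pos, if_neg hij, if_neg (Ne.symm hij)]
    linear_combination hu
  · simp [X, Y, hg, hik, hil, hjk, hjl]
  · simp only [Y, map_add, LinearMap.add_apply, hg, if_pos, if_neg hkl, if_neg (Ne.symm hkl)]
    linear_combination hv

theorem isotropic_identities_of_orthonormal {V ι : Type*} [NormedAddCommGroup V]
    [InnerProductSpace ℝ V] {W : V →ₗ[ℝ] V →ₗ[ℝ] V →ₗ[ℝ] V →ₗ[ℝ] ℝ}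
    {WC : (ℂ ⊗[ℝ] V) →ₗ[ℂ] (ℂ ⊗[ℝ] V) →ₗ[ℂ] (ℂ ⊗[ℝ] V) →ₗ[ℂ] (ℂ ⊗[ℝ] V) →ₗ[ℂ] ℂ}
    (hpair : ∀ X Y Z T : V, W X Y Z T = W Z T X Y)
    (hWC : ∀ x y z t : V, WC (1 ⊗ₜ x) (1 ⊗ₜ y) (1 ⊗ₜ z) (1 ⊗ₜ t) = (W x y z t : ℂ))
    (hiso : ∀ X Y : ℂ ⊗[ℝ] V, LinearIndependent ℂ ![X, Y] →
      LinearMap.BilinForm.baseChange ℂ (innerₗ V : LinearMap.BilinForm ℝ V) X X = 0 →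
      LinearMap.BilinForm.baseChange ℂ (innerₗ V : LinearMap.BilinForm ℝ V) X Y = 0 →
      LinearMap.BilinForm.baseChange ℂ (innerₗ V : LinearMap.BilinForm ℝ V) Y Y = 0 →
      WC X Y X Y = 0)
    {e : ι → V} (he : Orthonormal ℝ e) {i j k l : ι} (h : [i, j, k, l].Nodup) :
    W (e i) (e k) (e i) (e k) - W (e i) (e l) (e i) (e l) - W (e j) (e k) (e j) (e k) +
        W (e j) (e l) (e j) (e l) = 0 ∧
      W (e i) (e k) (e j) (e l) + W (e i) (e l) (e j) (e k) = 0 ∧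
      W (e i) (e k) (e i) (e l) = W (e j) (e k) (e j) (e l) :=
  isotropic_identities hpair hWC fun _ hv =>
    let ⟨hlin, hXX, hXY, hYY⟩ := isotropic_plane_of_orthonormal he h Complex.I_sq hv
    hiso _ _ hlin hXX hXY hYY

/-- A trace-free algebraic curvature tensor `W` on a real inner product
space of dimension `≥ 4` which vanishes on all 2-dimensional isotropic subspaces of the
complexification is identically zero. -/
theorem stmt_11 (V : Type*) [NormedAddCommGroup V] [InnerProductSpace ℝ V]
    [FiniteDimensional ℝ V] (hd : 4 ≤ Module.finrank ℝ V)
    (b : OrthonormalBasis (Fin (Module.finrank ℝ V)) ℝ V)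
    (W : V →ₗ[ℝ] V →ₗ[ℝ] V →ₗ[ℝ] V →ₗ[ℝ] ℝ)
    (hanti : ∀ X Y Z T : V, W X Y Z T = -W Y X Z T)
    (hpair : ∀ X Y Z T : V, W X Y Z T = W Z T X Y)
    (hbianchi : ∀ X Y Z T : V, W X Y Z T + W Y Z X T + W Z X Y T = 0)
    (htracefree : ∀ X Y : V, ∑ i, W (b i) X Y (b i) = 0)
    (WC : (ℂ ⊗[ℝ] V) →ₗ[ℂ] (ℂ ⊗[ℝ] V) →ₗ[ℂ] (ℂ ⊗[ℝ] V) →ₗ[ℂ] (ℂ ⊗[ℝ] V) →ₗ[ℂ] ℂ)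
    (hWC : ∀ x y z t : V,
      WC ((1 : ℂ) ⊗ₜ x) ((1 : ℂ) ⊗ₜ y) ((1 : ℂ) ⊗ₜ z) ((1 : ℂ) ⊗ₜ t) = (W x y z t : ℂ))
    (gC : LinearMap.BilinForm ℂ (ℂ ⊗[ℝ] V))
    (hgC : gC = LinearMap.BilinForm.baseChange ℂ
      (innerₗ V : LinearMap.BilinForm ℝ V))
    (hiso : ∀ X Y : ℂ ⊗[ℝ] V, LinearIndependent ℂ ![X, Y] →
      gC X X = 0 → gC X Y = 0 → gC Y Y = 0 → WC X Y X Y = 0) :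
    W = 0 := by
  subst hgC
  have hR : IsAlgebraicCurvature fun i j k l => W (b i) (b j) (b k) (b l) :=
    ⟨fun _ _ _ _ => hanti .., fun _ _ _ _ => hpair .., fun _ _ _ _ => hbianchi ..⟩
  have hcomp := hR.eq_zero (by rw [Fintype.card_fin]; omega) (fun j k => htracefree (b j) (b k))
    fun i j k l h => isotropic_identities_of_orthonormal hpair hWC hiso b.orthonormal h
  refine b.toBasis.ext fun i => b.toBasis.ext fun j => b.toBasis.ext fun k =>
    b.toBasis.ext fun l => ?_
  simpa using congrFun (congrFun (congrFun (congrFun hcomp i) j) k) l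
end
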